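/- Let L : C^∞(M) → C(M) be a linear map with L(1) = 0 that is local (if f vanishes on a neighbourhood of x then L(f)(x) = 0) and conditionally positive definite (for all f₁,…,f_k ∈ C^∞(M) and x ∈ M the matrix (k_L(f_i,f_j)(x)) is positive semidefinite, where k_L(f,g) := L(f̄g) − L(f̄)g − f̄L(g)). Then for any x ∈ M and any smooth real functions f₁,…,f_k with f_i(x) = 0 for all i, and any g_{ij} ∈ C^∞(M) with g_{ij}(x) = 0 for all i,j, one has L(f_i f_j g_{ij})(x) = 0 for all i,j. -/

import Mathlib

open scoped Manifold ComplexOrder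

noncomputable instance : ContMDiffRing 𝓘(ℝ, ℂ) (⊤ : ℕ∞) ℂ where
  contMDiff_mul := by
    rw [← modelWithCornersSelf_prod, chartedSpaceSelf_prod]
    exact contMDiff_iff_contDiff.mpr (contDiff_fst.mul contDiff_snd)

variable {m : ℕ} {M : Type*} [TopologicalSpace M] [ChartedSpace (EuclideanSpace ℝ (Fin m)) M]
  [IsManifold (𝓡 m) (⊤ : ℕ∞) M]


noncomputable instance : SMul ℂ C^(⊤ : ℕ∞)⟮𝓡 m, M; 𝓘(ℝ, ℂ), ℂ⟯ :=
  ⟨fun c f => ⟨fun x => c * f x, ContMDiff.mul contMDiff_const f.contMDiff⟩⟩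

noncomputable instance : Module ℂ C^(⊤ : ℕ∞)⟮𝓡 m, M; 𝓘(ℝ, ℂ), ℂ⟯ :=
  Function.Injective.module ℂ
    ({ toFun := fun f => (f : M → ℂ), map_zero' := rfl, map_add' := fun _ _ => rfl } :
      C^(⊤ : ℕ∞)⟮𝓡 m, M; 𝓘(ℝ, ℂ), ℂ⟯ →+ (M → ℂ))
    (fun f g h => ContMDiffMap.ext (congrFun h)) (fun _ _ => rfl)

/-- Pointwise complex conjugate of a smooth complex-valued function. -/
noncomputable def conjSM (f : C^(⊤ : ℕ∞)⟮𝓡 m, M; 𝓘(ℝ, ℂ), ℂ⟯) :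
    C^(⊤ : ℕ∞)⟮𝓡 m, M; 𝓘(ℝ, ℂ), ℂ⟯ :=
  ⟨fun x => starRingEnd ℂ (f x), by
    have h : ContMDiff 𝓘(ℝ, ℂ) 𝓘(ℝ, ℂ) (⊤ : ℕ∞) (fun z : ℂ => starRingEnd ℂ z) :=
      contMDiff_iff_contDiff.mpr Complex.conjCLE.toContinuousLinearMap.contDiff
    exact h.comp f.contMDiff⟩

/-- The carré du champ `k_L(f,g) = L(f̄ g) - L(f̄) g - f̄ L(g)` associated to a linear map
`L : C^∞(M) → C(M)`. -/
noncomputable def carreDuChamp (L : C^(⊤ : ℕ∞)⟮𝓡 m, M; 𝓘(ℝ, ℂ), ℂ⟯ →ₗ[ℂ] C(M, ℂ))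
    (f g : C^(⊤ : ℕ∞)⟮𝓡 m, M; 𝓘(ℝ, ℂ), ℂ⟯) : M → ℂ :=
  fun x => L (conjSM f * g) x - L (conjSM f) x * g x - starRingEnd ℂ (f x) * L g x

/-- `L` is local: if `f` vanishes on a neighbourhood of `x` then `L f x = 0`. -/
def IsLocalOp (L : C^(⊤ : ℕ∞)⟮𝓡 m, M; 𝓘(ℝ, ℂ), ℂ⟯ →ₗ[ℂ] C(M, ℂ)) : Prop :=
  ∀ (x : M) (f : C^(⊤ : ℕ∞)⟮𝓡 m, M; 𝓘(ℝ, ℂ), ℂ⟯),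
    (∀ᶠ y in nhds x, f y = 0) → L f x = 0

/-- `L` is real: `L(f̄) = conj (L f)` pointwise. -/
def IsRealOp (L : C^(⊤ : ℕ∞)⟮𝓡 m, M; 𝓘(ℝ, ℂ), ℂ⟯ →ₗ[ℂ] C(M, ℂ)) : Prop :=
  ∀ (f : C^(⊤ : ℕ∞)⟮𝓡 m, M; 𝓘(ℝ, ℂ), ℂ⟯) (x : M), L (conjSM f) x = starRingEnd ℂ (L f x)

/-- `L` is conditionally positive definite: for all smooth `f₁, …, f_k` and every `x ∈ M`,
the matrix `(k_L(f_i, f_j)(x))_{i,j}` is positive semidefinite. -/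
def IsCondPosDef (L : C^(⊤ : ℕ∞)⟮𝓡 m, M; 𝓘(ℝ, ℂ), ℂ⟯ →ₗ[ℂ] C(M, ℂ)) : Prop :=
  IsRealOp L ∧ ∀ (k : ℕ) (f : Fin k → C^(⊤ : ℕ∞)⟮𝓡 m, M; 𝓘(ℝ, ℂ), ℂ⟯) (x : M),
    (Matrix.of fun i j => carreDuChamp L (f i) (f j) x).PosSemidef

/-!
Positivity of the carré du champ gives `0 ≤ L(h²)(x)` for every real smooth `h` vanishing at `x`.
Given real `F, G` vanishing at `x` and `ε > 0`, choose a real smooth `s` with `s² = ε - G` near `x`;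
by locality `L((F s)²)(x) = ε L(F²)(x) - L(F² G)(x)`, so `±L(F² G)(x) ≤ ε L(F²)(x)` for every `ε > 0`,
whence `L(F² G)(x) = 0`. Complex-valued `G` are split into real and imaginary parts, and the
mixed products `f_i f_j` are handled by polarization.
-/

open scoped ContDiff Topology
open Filter

theorem nonpos_of_forall_le_pos_smul {E : Type*} [TopologicalSpace E] [Preorder E]
    [ClosedIciTopology E] [AddCommMonoid E] [Module ℝ E] [ContinuousSMul ℝ E] {r c : E}
    (h : ∀ ε : ℝ, 0 < ε → r ≤ ε • c) : r ≤ 0 := by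
  have hlim : Tendsto (fun ε : ℝ => ε • c) (𝓝[>] 0) (𝓝 0) := by
    have hcont : Continuous fun ε : ℝ => ε • c := continuous_id.smul continuous_const
    simpa using (hcont.tendsto 0).mono_left nhdsWithin_le_nhds
  exact ge_of_tendsto hlim (eventually_nhdsWithin_of_forall h)

theorem exists_contDiff_mul_self_eventuallyEq_sub {ε : ℝ} (hε : 0 < ε) :
    ∃ ψ : ℝ → ℝ, ContDiff ℝ ∞ ψ ∧ ∀ᶠ t in 𝓝 0, ψ t * ψ t = ε - t := by
  let b : ContDiffBump (0 : ℝ) := ⟨ε / 4, ε / 2, by positivity, by linarith⟩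
  -- `t ↦ t * b t` is a smooth truncation of the identity that stays below `ε`
  have hlt : ∀ t, t * b t < ε := by
    intro t
    rcases le_or_gt (ε / 2) |t| with ht | ht
    · rw [b.zero_of_le_dist (by simpa [Real.dist_eq] using ht), mul_zero]
      exact hε
    · calc t * b t ≤ |t| * b t := mul_le_mul_of_nonneg_right (le_abs_self t) b.nonneg
        _ ≤ |t| := mul_le_of_le_one_right (abs_nonneg t) b.le_one
        _ < ε := by linarith
  refine ⟨fun t => √(ε - t * b t),
    (contDiff_const.sub (contDiff_id.mul b.contDiff)).sqrt fun t => (sub_pos.2 (hlt t)).ne', ?_⟩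
  filter_upwards [Metric.closedBall_mem_nhds (0 : ℝ) (by positivity : 0 < ε / 4)] with t ht
  have hbt : b t = 1 := b.one_of_mem_closedBall ht
  have htε := hlt t
  rw [hbt, mul_one] at htε ⊢
  exact Real.mul_self_sqrt (sub_nonneg.2 htε.le)

section

omit [IsManifold (𝓡 m) (⊤ : ℕ∞) M]

variable {L : C^(⊤ : ℕ∞)⟮𝓡 m, M; 𝓘(ℝ, ℂ), ℂ⟯ →ₗ[ℂ] C(M, ℂ)} {x : M}

noncomputable def postcompSM (ψ : ℂ → ℂ) (hψ : ContDiff ℝ ∞ ψ)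
    (G : C^(⊤ : ℕ∞)⟮𝓡 m, M; 𝓘(ℝ, ℂ), ℂ⟯) : C^(⊤ : ℕ∞)⟮𝓡 m, M; 𝓘(ℝ, ℂ), ℂ⟯ :=
  ⟨fun y => ψ (G y), (contMDiff_iff_contDiff.mpr hψ).comp G.contMDiff⟩

@[simp]
theorem postcompSM_apply (ψ : ℂ → ℂ) (hψ : ContDiff ℝ ∞ ψ) (G : C^(⊤ : ℕ∞)⟮𝓡 m, M; 𝓘(ℝ, ℂ), ℂ⟯)
    (y : M) : postcompSM ψ hψ G y = ψ (G y) :=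
  rfl

theorem conjSM_eq_self {F : C^(⊤ : ℕ∞)⟮𝓡 m, M; 𝓘(ℝ, ℂ), ℂ⟯}
    (hF : ∀ y, starRingEnd ℂ (F y) = F y) : conjSM F = F :=
  ContMDiffMap.ext hF

theorem IsLocalOp.apply_eq_of_eventuallyEq (hloc : IsLocalOp L)
    {f g : C^(⊤ : ℕ∞)⟮𝓡 m, M; 𝓘(ℝ, ℂ), ℂ⟯} (h : f =ᶠ[𝓝 x] g) : L f x = L g x := by
  have hdiff := hloc x (f - g) (h.mono fun y hy => by simp [hy])
  rwa [map_sub, ContinuousMap.sub_apply, sub_eq_zero] at hdiff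

theorem IsCondPosDef.apply_conjSM_mul_self_nonneg (hcpd : IsCondPosDef L)
    {h : C^(⊤ : ℕ∞)⟮𝓡 m, M; 𝓘(ℝ, ℂ), ℂ⟯} (hx : h x = 0) : 0 ≤ L (conjSM h * h) x := by
  simpa [carreDuChamp, hx] using (hcpd.2 1 ![h] x).diag_nonneg (i := 0)

theorem exists_real_mul_self_eventuallyEq_sub {G : C^(⊤ : ℕ∞)⟮𝓡 m, M; 𝓘(ℝ, ℂ), ℂ⟯}
    (hG : ∀ y, starRingEnd ℂ (G y) = G y) (hGx : G x = 0) {ε : ℝ} (hε : 0 < ε) :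
    ∃ s : C^(⊤ : ℕ∞)⟮𝓡 m, M; 𝓘(ℝ, ℂ), ℂ⟯, (∀ y, starRingEnd ℂ (s y) = s y) ∧
      ∀ᶠ y in 𝓝 x, s y * s y = ε - G y := by
  obtain ⟨ψ, hψ, hψsq⟩ := exists_contDiff_mul_self_eventuallyEq_sub hε
  have hψC : ContDiff ℝ ∞ fun z : ℂ => (ψ z.re : ℂ) :=
    Complex.ofRealCLM.contDiff.comp (hψ.comp Complex.reCLM.contDiff)
  refine ⟨postcompSM _ hψC G, fun y => Complex.conj_ofReal _, ?_⟩
  have hre : Tendsto (fun y => (G y).re) (𝓝 x) (𝓝 0) := by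
    simpa [Function.comp_def, hGx] using
      (Complex.continuous_re.comp G.contMDiff.continuous).tendsto x
  filter_upwards [hre.eventually hψsq] with y hy
  rw [postcompSM_apply, ← Complex.ofReal_mul, hy, Complex.ofReal_sub,
    Complex.conj_eq_iff_re.1 (hG y)]

theorem apply_mul_self_mul_le (hloc : IsLocalOp L) (hcpd : IsCondPosDef L)
    {F G : C^(⊤ : ℕ∞)⟮𝓡 m, M; 𝓘(ℝ, ℂ), ℂ⟯} (hF : ∀ y, starRingEnd ℂ (F y) = F y)
    (hG : ∀ y, starRingEnd ℂ (G y) = G y) (hFx : F x = 0) (hGx : G x = 0) {ε : ℝ} (hε : 0 < ε) :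
    L (F * F * G) x ≤ ε • L (F * F) x := by
  obtain ⟨s, hs, hsG⟩ := exists_real_mul_self_eventuallyEq_sub hG hGx hε
  have hFs : conjSM (F * s) = F * s := conjSM_eq_self fun y => by simp [hF y, hs y]
  have hpos := hcpd.apply_conjSM_mul_self_nonneg (x := x) (h := F * s) (by simp [hFx])
  have hgerm : L (F * s * (F * s)) x = L ((ε : ℂ) • (F * F) - F * F * G) x :=
    hloc.apply_eq_of_eventuallyEq <| hsG.mono fun y hy => by
      change F y * s y * (F y * s y) = ε * (F y * F y) - F y * F y * G y
      linear_combination (F y * F y) * hy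
  rwa [hFs, hgerm, map_sub, map_smul, ContinuousMap.sub_apply, ContinuousMap.smul_apply,
    sub_nonneg, Complex.coe_smul] at hpos

theorem apply_mul_self_mul_eq_zero_of_real (hloc : IsLocalOp L) (hcpd : IsCondPosDef L)
    {F G : C^(⊤ : ℕ∞)⟮𝓡 m, M; 𝓘(ℝ, ℂ), ℂ⟯} (hF : ∀ y, starRingEnd ℂ (F y) = F y)
    (hG : ∀ y, starRingEnd ℂ (G y) = G y) (hFx : F x = 0) (hGx : G x = 0) :
    L (F * F * G) x = 0 := by
  have hle : ∀ G' : C^(⊤ : ℕ∞)⟮𝓡 m, M; 𝓘(ℝ, ℂ), ℂ⟯, (∀ y, starRingEnd ℂ (G' y) = G' y) →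
      G' x = 0 → L (F * F * G') x ≤ 0 := fun G' hG' hG'x =>
    nonpos_of_forall_le_pos_smul fun _ hε => apply_mul_self_mul_le hloc hcpd hF hG' hFx hG'x hε
  have hneg := hle (-G) (by simp [hG]) (by simp [hGx])
  rw [mul_neg, map_neg, ContinuousMap.neg_apply, neg_nonpos] at hneg
  exact le_antisymm (hle G hG hGx) hneg

theorem apply_mul_self_mul_eq_zero (hloc : IsLocalOp L) (hcpd : IsCondPosDef L)
    {F G : C^(⊤ : ℕ∞)⟮𝓡 m, M; 𝓘(ℝ, ℂ), ℂ⟯} (hF : ∀ y, starRingEnd ℂ (F y) = F y)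
    (hFx : F x = 0) (hGx : G x = 0) : L (F * F * G) x = 0 := by
  have hre : ContDiff ℝ ∞ fun z : ℂ => (z.re : ℂ) :=
    Complex.ofRealCLM.contDiff.comp Complex.reCLM.contDiff
  have him : ContDiff ℝ ∞ fun z : ℂ => (z.im : ℂ) :=
    Complex.ofRealCLM.contDiff.comp Complex.imCLM.contDiff
  let R := postcompSM _ hre G
  let J := postcompSM _ him G
  have hRJ : F * F * G = F * F * R + Complex.I • (F * F * J) := ContMDiffMap.ext fun y => by
    change F y * F y * G y = F y * F y * (G y).re + Complex.I * (F y * F y * (G y).im)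
    linear_combination (F y * F y) * (Complex.re_add_im (G y)).symm
  have hR := apply_mul_self_mul_eq_zero_of_real hloc hcpd hF (G := R)
    (fun y => Complex.conj_ofReal _) hFx (by simp [R, hGx])
  have hJ := apply_mul_self_mul_eq_zero_of_real hloc hcpd hF (G := J)
    (fun y => Complex.conj_ofReal _) hFx (by simp [J, hGx])
  rw [hRJ, map_add, map_smul, ContinuousMap.add_apply, ContinuousMap.smul_apply, hR, hJ,
    smul_zero, add_zero]

end

theorem local_condPosDef_vanishing_general
    (L : C^(⊤ : ℕ∞)⟮𝓡 m, M; 𝓘(ℝ, ℂ), ℂ⟯ →ₗ[ℂ] C(M, ℂ))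
    (hloc : IsLocalOp L) (hcpd : IsCondPosDef L)
    (x : M) (k : ℕ) (f : Fin k → C^(⊤ : ℕ∞)⟮𝓡 m, M; 𝓘(ℝ, ℂ), ℂ⟯)
    (hreal : ∀ i y, starRingEnd ℂ (f i y) = f i y)
    (hfx : ∀ i, f i x = 0)
    (g : Fin k → Fin k → C^(⊤ : ℕ∞)⟮𝓡 m, M; 𝓘(ℝ, ℂ), ℂ⟯)
    (hgx : ∀ i j, g i j x = 0) :
    ∀ i j, L (f i * f j * g i j) x = 0 := by
  intro i j
  have hsq : ∀ F : C^(⊤ : ℕ∞)⟮𝓡 m, M; 𝓘(ℝ, ℂ), ℂ⟯, (∀ y, starRingEnd ℂ (F y) = F y) →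
      F x = 0 → L (F * F * g i j) x = 0 := fun F hF hFx =>
    apply_mul_self_mul_eq_zero hloc hcpd hF hFx (hgx i j)
  have hpolar : (f i + f j) * (f i + f j) * g i j =
      f i * f i * g i j + f j * f j * g i j + (f i * f j * g i j + f i * f j * g i j) := by ring
  have hsum := hsq (f i + f j) (fun y => by simp [hreal]) (by simp [hfx])
  rw [hpolar, map_add, map_add, map_add, ContinuousMap.add_apply, ContinuousMap.add_apply,
    ContinuousMap.add_apply, hsq _ (hreal i) (hfx i), hsq _ (hreal j) (hfx j), zero_add,
    zero_add, ← two_mul, mul_eq_zero] at hsum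
  exact hsum.resolve_left two_ne_zero

/-- If `L : C^∞(M) → C(M)` is linear with `L 1 = 0`, local and conditionally
positive definite, then for any `x ∈ M`, any smooth real functions `f₁, …, f_k` vanishing at `x`
and any smooth `g_{ij}` vanishing at `x`, one has `L (f_i f_j g_{ij}) x = 0`. -/
theorem local_condPosDef_vanishing [CompactSpace M]
    (L : C^(⊤ : ℕ∞)⟮𝓡 m, M; 𝓘(ℝ, ℂ), ℂ⟯ →ₗ[ℂ] C(M, ℂ))
    (hone : L 1 = 0) (hloc : IsLocalOp L) (hcpd : IsCondPosDef L)
    (x : M) (k : ℕ) (f : Fin k → C^(⊤ : ℕ∞)⟮𝓡 m, M; 𝓘(ℝ, ℂ), ℂ⟯)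
    (hreal : ∀ i y, starRingEnd ℂ (f i y) = f i y)
    (hfx : ∀ i, f i x = 0)
    (g : Fin k → Fin k → C^(⊤ : ℕ∞)⟮𝓡 m, M; 𝓘(ℝ, ℂ), ℂ⟯)
    (hgx : ∀ i j, g i j x = 0) :
    ∀ i j, L (f i * f j * g i j) x = 0 :=
  local_condPosDef_vanishing_general L hloc hcpd x k f hreal hfx g hgx
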